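/- Let E be a finite-dimensional real normed vector space, U ⊆ E open, J an almost complex structure on U, and Γ the Christoffel symbols of an almost complex linear connection on U (∇J = 0) with torsion T. Define A : U → (E →L[ℝ] E →L[ℝ] E) by A(x)(u)(v) := -(1/2)·T^{++}(x)(u,v) - T^{-+}(x)(u,v), components taken with respect to J(x). Then Γ̃ := Γ + A is again an almost complex connection for J, and its torsion satisfies T̃(x)(u,v) = (1/4)·N_J(u,v)(x) for all x, u, v; in other words, minimal almost complex connections exist. -/

import Mathlib

/-- The Lie bracket of two vector fields on a normed space. -/
noncomputable def lieB {G : Type*} [NormedAddCommGroup G] [NormedSpace ℝ G]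
    (X Y : G → G) : G → G :=
  fun p => fderiv ℝ Y p (X p) - fderiv ℝ X p (Y p)

/-- The Nijenhuis tensor `N_J(X,Y) = [JX,JY] - J[JX,Y] - J[X,JY] - [X,Y]`. -/
noncomputable def nijenhuis {G : Type*} [NormedAddCommGroup G] [NormedSpace ℝ G]
    (J : G → G →L[ℝ] G) (X Y : G → G) : G → G :=
  fun p =>
    lieB (fun q => J q (X q)) (fun q => J q (Y q)) p
      - J p (lieB (fun q => J q (X q)) Y p)
      - J p (lieB X (fun q => J q (Y q)) p)
      - lieB X Y p

/-- The `(ε₁,ε₂)`-component of a bilinear map with respect to a linear complex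
structure `j`. -/
noncomputable def signComp {E : Type*} [NormedAddCommGroup E] [NormedSpace ℝ E]
    (j : E →L[ℝ] E) (S : E → E → E) (ε₁ ε₂ : ℝ) : E → E → E :=
  fun u v =>
    (1/4 : ℝ) • (S u v - ε₁ • j (S (j u) v) - ε₂ • j (S u (j v)) - (ε₁ * ε₂) • S (j u) (j v))

/-- The torsion `T(x)(u,v) = Γ(x)(u)(v) - Γ(x)(v)(u)` of a connection. -/
noncomputable def torsionOf {E : Type*} [NormedAddCommGroup E] [NormedSpace ℝ E]
    (Γ : E → E →L[ℝ] E →L[ℝ] E) : E → E → E → E :=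
  fun x u v => Γ x u v - Γ x v u

/-- The gauge `A = -(1/2)T^{++} - T^{-+}` of Theorem A.1 of the paper. -/
noncomputable def gaugeA {E : Type*} [NormedAddCommGroup E] [NormedSpace ℝ E]
    (J : E → E →L[ℝ] E) (Γ : E → E →L[ℝ] E →L[ℝ] E) : E → E → E → E :=
  fun x u v =>
    -((1/2 : ℝ) • signComp (J x) (torsionOf Γ x) 1 1 u v)
      - signComp (J x) (torsionOf Γ x) (-1) 1 u v

/-- The gauged connection `Γ̃ = Γ + A`. -/
noncomputable def newConn {E : Type*} [NormedAddCommGroup E] [NormedSpace ℝ E]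
    (J : E → E →L[ℝ] E) (Γ : E → E →L[ℝ] E →L[ℝ] E) : E → E → E → E :=
  fun x u v => Γ x u v + gaugeA J Γ x u v


/-!
The Nijenhuis tensor of constant fields only involves `DJ`, and `∇J = 0` expresses `DJ` through
`Γ`: `(D_u J) v = J Γ(u, v) - Γ(u, J v)`. Substituting, `N_J(u, v)` becomes exactly `4 T^{--}(u, v)`.
On the other hand the torsion of any connection is antisymmetric, so `T^{+-}(u, v) = -T^{-+}(v, u)`
and `T^{++}` is antisymmetric; hence the antisymmetrization of `A` is `-T^{++} - T^{+-} - T^{-+}`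
and `Γ + A` has torsion `T^{--}`. Finally `A` is built from the components with `ε₂ = 1`,
which are complex linear in the second slot, so adding `A` preserves `∇J = 0`.
-/

section SignComp

variable {E : Type*} [NormedAddCommGroup E] [NormedSpace ℝ E] (j : E →L[ℝ] E)

lemma ContinuousLinearMap.apply_apply_of_comp_eq_neg_id
    (hj : j.comp j = -ContinuousLinearMap.id ℝ E) (w : E) : j (j w) = -w := by
  simpa using congr($hj w)

lemma sum_signComp_components (S : E → E → E) (u v : E) :
    signComp j S 1 1 u v + signComp j S 1 (-1) u v + signComp j S (-1) 1 u v
      + signComp j S (-1) (-1) u v = S u v := by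
  simp only [signComp]
  module

lemma signComp_swap_of_antisymm {S : E → E → E} (hS : ∀ u v, S v u = -S u v)
    (ε₁ ε₂ : ℝ) (u v : E) : signComp j S ε₁ ε₂ v u = -signComp j S ε₂ ε₁ u v := by
  simp only [signComp, hS v, hS (j v), map_neg]
  module

lemma signComp_one_apply_right (hj : j.comp j = -ContinuousLinearMap.id ℝ E)
    {S : E → E → E} (hS : ∀ u v, S u (-v) = -S u v) (ε : ℝ) (u v : E) :
    signComp j S ε 1 u (j v) = j (signComp j S ε 1 u v) := by
  simp only [signComp, j.apply_apply_of_comp_eq_neg_id hj, hS, map_smul, map_sub, map_neg]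
  module

lemma nijenhuis_expr_eq_four_smul_signComp (hj : j.comp j = -ContinuousLinearMap.id ℝ E)
    {D g : E → E → E} (hD : ∀ a b, D a b = j (g a b) - g a (j b)) (u v : E) :
    D (j u) v - D (j v) u + j (D v u) - j (D u v)
      = (4 : ℝ) • signComp j (fun a b => g a b - g b a) (-1) (-1) u v := by
  simp only [signComp, hD, j.apply_apply_of_comp_eq_neg_id hj, map_sub]
  module

end SignComp

lemma nijenhuis_const_apply {G : Type*} [NormedAddCommGroup G] [NormedSpace ℝ G]
    {J : G → G →L[ℝ] G} {x : G} (hJ : DifferentiableAt ℝ J x) (u v : G) :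
    nijenhuis J (fun _ => u) (fun _ => v) x
      = fderiv ℝ J x (J x u) v - fderiv ℝ J x (J x v) u
          + J x (fderiv ℝ J x v u) - J x (fderiv ℝ J x u v) := by
  have hJa : ∀ a : G, fderiv ℝ (fun q => J q a) x = (fderiv ℝ J x).flip a := fun a => by
    rw [fderiv_clm_apply hJ (differentiableAt_const a)]
    simp
  simp only [nijenhuis, lieB, hJa, fderiv_fun_const, Pi.zero_apply, zero_apply,
    ContinuousLinearMap.flip_apply, map_neg, sub_zero, zero_sub]
  abel

section Connection

variable {E : Type*} [NormedAddCommGroup E] [NormedSpace ℝ E]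
  (J : E → E →L[ℝ] E) (Γ : E → E →L[ℝ] E →L[ℝ] E)

lemma torsionOf_swap (x u v : E) : torsionOf Γ x v u = -torsionOf Γ x u v :=
  (neg_sub _ _).symm

lemma torsionOf_apply_neg_right (x u v : E) : torsionOf Γ x u (-v) = -torsionOf Γ x u v := by
  simp only [torsionOf, map_neg, neg_apply]
  abel

lemma newConn_sub_swap (x u v : E) :
    newConn J Γ x u v - newConn J Γ x v u = signComp (J x) (torsionOf Γ x) (-1) (-1) u v := by
  have hswap := signComp_swap_of_antisymm (J x) (torsionOf_swap Γ x)
  have hsum := sum_signComp_components (J x) (torsionOf Γ x) u v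
  have hsplit : newConn J Γ x u v - newConn J Γ x v u
      = torsionOf Γ x u v + gaugeA J Γ x u v - gaugeA J Γ x v u := by
    simp only [newConn, torsionOf]
    abel
  rw [hsplit, ← hsum]
  simp only [gaugeA]
  rw [hswap 1 1 u v, hswap (-1) 1 u v]
  module

lemma gaugeA_apply_right {x : E} (hJ2 : (J x).comp (J x) = -ContinuousLinearMap.id ℝ E)
    (u v : E) : gaugeA J Γ x u (J x v) = J x (gaugeA J Γ x u v) := by
  have hcomp := signComp_one_apply_right (J x) hJ2 (torsionOf_apply_neg_right Γ x)
  simp only [gaugeA, hcomp, map_sub, map_neg, map_smul]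

end Connection

theorem minimal_connection_exists_general
    {E : Type*} [NormedAddCommGroup E] [NormedSpace ℝ E]
    (U : Set E) (hU : IsOpen U)
    (J : E → E →L[ℝ] E)
    (hJs : ContDiffOn ℝ (⊤ : ℕ∞) J U)
    (hJ2 : ∀ x ∈ U, (J x).comp (J x) = -ContinuousLinearMap.id ℝ E)
    (Γ : E → E →L[ℝ] E →L[ℝ] E)
    (hac : ∀ x ∈ U, ∀ u v : E,
      fderiv ℝ J x u v + Γ x u (J x v) - J x (Γ x u v) = 0) :
    (∀ x ∈ U, ∀ u v : E,
      fderiv ℝ J x u v + newConn J Γ x u (J x v) - J x (newConn J Γ x u v) = 0) ∧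
    (∀ x ∈ U, ∀ u v : E,
      newConn J Γ x u v - newConn J Γ x v u
        = (1/4 : ℝ) • nijenhuis J (fun _ => u) (fun _ => v) x) := by
  refine ⟨fun x hx u v => ?_, fun x hx u v => ?_⟩
  · have hA := gaugeA_apply_right J Γ (hJ2 x hx) u v
    calc fderiv ℝ J x u v + newConn J Γ x u (J x v) - J x (newConn J Γ x u v)
        = fderiv ℝ J x u v + Γ x u (J x v) - J x (Γ x u v) := by
          simp only [newConn, hA, map_add]
          abel
      _ = 0 := hac x hx u v
  · have hD : ∀ a b, fderiv ℝ J x a b = J x (Γ x a b) - Γ x a (J x b) := fun a b =>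
      eq_sub_of_add_eq (sub_eq_zero.mp (hac x hx a b))
    have hJx : DifferentiableAt ℝ J x :=
      (hJs.contDiffAt (hU.mem_nhds hx)).differentiableAt (by simp)
    rw [newConn_sub_swap, nijenhuis_const_apply hJx,
      nijenhuis_expr_eq_four_smul_signComp (J x) (hJ2 x hx) hD, smul_smul,
      one_div, inv_mul_cancel₀ four_ne_zero, one_smul]
    rfl

/-- Second part of Theorem A.1 of the paper: gauging an almost complex connection `Γ`
by `A = -(1/2)T^{++} - T^{-+}` yields again an almost complex connection, whose
torsion is `(1/4)·N_J`; i.e. minimal almost complex connections exist. -/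
theorem minimal_connection_exists
    {E : Type*} [NormedAddCommGroup E] [NormedSpace ℝ E] [FiniteDimensional ℝ E]
    (U : Set E) (hU : IsOpen U)
    (J : E → E →L[ℝ] E)
    (hJs : ContDiffOn ℝ (⊤ : ℕ∞) J U)
    (hJ2 : ∀ x ∈ U, (J x).comp (J x) = -ContinuousLinearMap.id ℝ E)
    (Γ : E → E →L[ℝ] E →L[ℝ] E)
    (hΓs : ContDiffOn ℝ (⊤ : ℕ∞) Γ U)
    (hac : ∀ x ∈ U, ∀ u v : E,
      fderiv ℝ J x u v + Γ x u (J x v) - J x (Γ x u v) = 0) :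
    (∀ x ∈ U, ∀ u v : E,
      fderiv ℝ J x u v + newConn J Γ x u (J x v) - J x (newConn J Γ x u v) = 0) ∧
    (∀ x ∈ U, ∀ u v : E,
      newConn J Γ x u v - newConn J Γ x v u
        = (1/4 : ℝ) • nijenhuis J (fun _ => u) (fun _ => v) x) :=
  minimal_connection_exists_general U hU J hJs hJ2 Γ hac
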